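/- arXiv:1701.04797 — 3 statements merged into one kernel-verified Lean document; each statement's English description precedes it below -/
import Mathlib

section
/- Let g be a function analytic in a neighborhood of the closed disk {|z| ≤ r} and let ζ ∈ ℂ with |ζ| < r. Suppose (Q_n)_{n} is a sequence of polynomials uniformly bounded on {|z| = r}, and P_n are polynomials with deg P_n < n such that the function Q_n(z)g(z)/z^{n+1} − (z−ζ)P_n(z)/z^{n+1} is analytic on {|z| < r'} for some r' > r. If Q_n g − (·−ζ)P_n has a zero of order at least n+1 at the origin, then Q_n(ζ)g(ζ) = (1/2πi) ∮_{|ω|=r} (ζ^{n+1}/ω^{n+1}) · Q_n(ω)g(ω)/(ω−ζ) dω, and consequently limsup_{n→∞} |Q_n(ζ)g(ζ)|^{1/n} ≤ |ζ|/r. -/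
open Polynomial Filter Metric Topology

/-!
Write `Q g = z^(n+1) h + (z - ζ) P` on the disc. Multiplied by `ζ^(n+1) / (ω^(n+1) (ω - ζ))`, the
first term becomes the Cauchy kernel applied to `ζ^(n+1) h`, whose integral is
`2πi ζ^(n+1) h ζ = 2πi Q ζ g ζ`, while the second becomes `ζ^(n+1) P ω / ω^(n+1)`, a combination of
powers `ω^k` with `k ≤ -2` since `deg P < n`, whose integral vanishes. Bounding the integrand on
`|ω| = r` gives `|Q_n ζ g ζ| ≤ K (|ζ|/r)^(n+1)` with `K` independent of `n`, and taking `n`-th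
roots gives the limsup bound.
-/

theorem zpow_natCast_sub_natCast_of_lt {G₀ : Type*} [GroupWithZero G₀] (a : G₀) {m n : ℕ}
    (hmn : m < n) : a ^ (m - n : ℤ) = a ^ m / a ^ n := by
  rcases eq_or_ne a 0 with rfl | ha
  · rw [zero_zpow _ (by omega), zero_pow (by omega : n ≠ 0), div_zero]
  · exact zpow_natCast_sub_natCast₀ ha m n

theorem eval_div_pow_eq_sum_zpow {K : Type*} [Field K] {p : K[X]} {n : ℕ}
    (hp : p.natDegree < n) (z : K) :
    p.eval z / z ^ (n + 1) = ∑ i ∈ Finset.range n, p.coeff i * z ^ ((i : ℤ) - (n + 1)) := by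
  rw [eval_eq_sum_range' hp, Finset.sum_div]
  refine Finset.sum_congr rfl fun i hi => ?_
  rw [mul_div_assoc, ← zpow_natCast_sub_natCast_of_lt _ (Nat.lt_succ_of_lt (Finset.mem_range.1 hi)),
    Nat.cast_succ]

theorem circleIntegral_eval_sub_div_pow_eq_zero {p : ℂ[X]} {n : ℕ} (hp : p.degree < n)
    (c : ℂ) (R : ℝ) :
    (∮ z in C(c, R), p.eval (z - c) / (z - c) ^ (n + 1)) = 0 := by
  rcases eq_or_ne R 0 with rfl | hR
  · exact circleIntegral.integral_radius_zero _ _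
  rcases eq_or_ne p 0 with rfl | hp0
  · simp [circleIntegral]
  simp_rw [eval_div_pow_eq_sum_zpow ((natDegree_lt_iff_degree_lt hp0).2 hp)]
  rw [circleIntegral.integral_fun_sum]
  · refine Finset.sum_eq_zero fun i hi => ?_
    rw [circleIntegral.integral_const_mul, circleIntegral.integral_sub_zpow_of_ne, mul_zero]
    have := Finset.mem_range.1 hi
    omega
  · refine fun i _ => ContinuousOn.circleIntegrable' ?_
    have hc : c ∉ sphere c |R| := by simpa [eq_comm] using hR
    exact continuousOn_const.mul ((continuousOn_id.sub continuousOn_const).zpow₀ _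
      fun z hz => Or.inl (sub_ne_zero.2 (ne_of_mem_of_not_mem hz hc)))

open Complex Real in
theorem circleIntegral_pow_div_pow_mul_div_sub {r : ℝ} {ζ : ℂ} (hζ : ζ ∈ ball (0 : ℂ) r)
    {n : ℕ} {F h : ℂ → ℂ} {p : ℂ[X]} (hh : DifferentiableOn ℂ h (closedBall 0 r))
    (hp : p.degree < n)
    (hF : ∀ z ∈ closedBall (0 : ℂ) r, F z - (z - ζ) * p.eval z = z ^ (n + 1) * h z) :
    (∮ ω in C(0, r), ζ ^ (n + 1) / ω ^ (n + 1) * F ω / (ω - ζ)) = 2 * π * I * F ζ := by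
  have hr : 0 ≤ r := (pos_of_mem_ball hζ).le
  have hω0 : ∀ ω ∈ sphere (0 : ℂ) r, ω ≠ 0 := fun ω hω =>
    ne_of_mem_of_not_mem hω (by simpa [eq_comm] using (pos_of_mem_ball hζ).ne')
  have hωζ : ∀ ω ∈ sphere (0 : ℂ) r, ω - ζ ≠ 0 := fun ω hω =>
    sub_ne_zero.2 (ne_of_mem_of_not_mem hω (sphere_disjoint_ball.ne_of_mem · hζ rfl))
  have hsplit : Set.EqOn (fun ω => ζ ^ (n + 1) / ω ^ (n + 1) * F ω / (ω - ζ))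
      (fun ω => ζ ^ (n + 1) * ((ω - ζ)⁻¹ • h ω) + ζ ^ (n + 1) * (p.eval ω / ω ^ (n + 1)))
      (sphere 0 r) := fun ω hω => by
    have hFω : F ω = ω ^ (n + 1) * h ω + (ω - ζ) * p.eval ω := by
      linear_combination hF ω (sphere_subset_closedBall hω)
    have hω0' := hω0 ω hω
    have hωζ' := hωζ ω hω
    simp only [hFω, smul_eq_mul]
    field_simp
  have hcauchy := hh.circleIntegral_sub_inv_smul hζ
  have hpoly := circleIntegral_eval_sub_div_pow_eq_zero hp 0 r
  simp only [sub_zero] at hpoly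
  have hFζ : F ζ = ζ ^ (n + 1) * h ζ := by simpa using hF ζ (ball_subset_closedBall hζ)
  rw [circleIntegral.integral_congr hr hsplit, circleIntegral.integral_add,
    circleIntegral.integral_const_mul, circleIntegral.integral_const_mul, hcauchy, hpoly, hFζ]
  · simp only [smul_eq_mul]
    ring
  · refine ContinuousOn.circleIntegrable hr (continuousOn_const.mul ?_)
    exact ((continuousOn_id.sub continuousOn_const).inv₀ hωζ).smul
      (hh.continuousOn.mono sphere_subset_closedBall)
  · refine ContinuousOn.circleIntegrable hr (continuousOn_const.mul ?_)
    exact p.continuous.continuousOn.div (continuousOn_pow _) fun ω hω => pow_ne_zero _ (hω0 ω hω)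

open Complex Real in
theorem norm_two_pi_I_inv_mul_circleIntegral_pow_div_pow_mul_div_sub_le {r B : ℝ} {ζ : ℂ}
    (hζ : ‖ζ‖ < r) (n : ℕ) {F : ℂ → ℂ} (hF : ∀ ω ∈ sphere (0 : ℂ) r, ‖F ω‖ ≤ B) :
    ‖(2 * π * I)⁻¹ * ∮ ω in C(0, r), ζ ^ (n + 1) / ω ^ (n + 1) * F ω / (ω - ζ)‖ ≤
      r * (B / (r - ‖ζ‖)) * (‖ζ‖ / r) ^ (n + 1) := by
  have hr : 0 < r := (norm_nonneg ζ).trans_lt hζ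
  have hgap : 0 < r - ‖ζ‖ := sub_pos.2 hζ
  have hkernel : ∀ ω ∈ sphere (0 : ℂ) r,
      ‖ζ ^ (n + 1) / ω ^ (n + 1) * F ω / (ω - ζ)‖ ≤ (‖ζ‖ / r) ^ (n + 1) * (B / (r - ‖ζ‖)) := by
    intro ω hω
    have hωr : ‖ω‖ = r := by simpa using hω
    have hdist : r - ‖ζ‖ ≤ ‖ω - ζ‖ := hωr ▸ norm_sub_norm_le ω ζ
    rw [norm_div, norm_mul, norm_div, norm_pow, norm_pow, hωr, ← div_pow, mul_div_assoc]
    gcongr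
    · exact (norm_nonneg _).trans (hF ω hω)
    · exact hF ω hω
  have hnorm : ‖(2 * π * I : ℂ)⁻¹‖ = (2 * π)⁻¹ := by
    simp [abs_of_pos pi_pos]
  calc _ ≤ (2 * π)⁻¹ * (2 * π * r * ((‖ζ‖ / r) ^ (n + 1) * (B / (r - ‖ζ‖)))) := by
        rw [norm_mul, hnorm]
        gcongr
        exact circleIntegral.norm_integral_le_of_norm_le_const hr.le hkernel
    _ = r * (B / (r - ‖ζ‖)) * (‖ζ‖ / r) ^ (n + 1) := by
        field_simp

theorem limsup_rpow_one_div_le_of_le_mul_pow {u : ℕ → ℝ} {K a : ℝ} (hu : ∀ n, 0 ≤ u n)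
    (ha : 0 ≤ a) (hle : ∀ n, u n ≤ K * a ^ n) :
    limsup (fun n => u n ^ ((1 : ℝ) / n)) atTop ≤ a := by
  set K' := max K 1
  have hK' : 0 < K' := one_pos.trans_le (le_max_right _ _)
  have hroot : ∀ n ≥ 1, u n ^ ((1 : ℝ) / n) ≤ K' ^ ((1 : ℝ) / n) * a := by
    intro n hn
    calc u n ^ ((1 : ℝ) / n) ≤ (K' * a ^ n) ^ ((1 : ℝ) / n) := by
          gcongr
          · exact hu n
          · exact (hle n).trans (by gcongr; exact le_max_left _ _)
      _ = K' ^ ((1 : ℝ) / n) * a := by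
          rw [Real.mul_rpow hK'.le (pow_nonneg ha n), one_div,
            Real.pow_rpow_inv_natCast ha (by omega)]
  have hlim : Tendsto (fun n : ℕ => K' ^ ((1 : ℝ) / n) * a) atTop (𝓝 a) := by
    have := ((Real.continuousAt_const_rpow hK'.ne').tendsto.comp
      tendsto_one_div_atTop_nhds_zero_nat).mul_const a
    simpa [Function.comp_def] using this
  calc limsup (fun n => u n ^ ((1 : ℝ) / n)) atTop
      ≤ limsup (fun n : ℕ => K' ^ ((1 : ℝ) / n) * a) atTop :=
        limsup_le_limsup (eventually_atTop.2 ⟨1, hroot⟩)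
          (isCoboundedUnder_le_of_le atTop fun n => Real.rpow_nonneg (hu n) _)
          hlim.isBoundedUnder_le
    _ = a := hlim.limsup_eq

theorem cauchy_integral_estimate_general (r : ℝ) (g : ℂ → ℂ)
    (hg : AnalyticOnNhd ℂ g (Metric.closedBall 0 r))
    (ζ : ℂ) (hζ : ‖ζ‖ < r)
    (Q P : ℕ → Polynomial ℂ)
    (hQbdd : ∃ C : ℝ, ∀ n, ∀ z : ℂ, ‖z‖ = r → ‖(Q n).eval z‖ ≤ C)
    (hPdeg : ∀ n, (P n).degree < n)
    (hzero : ∀ n, ∃ h : ℂ → ℂ, AnalyticOnNhd ℂ h (Metric.closedBall 0 r) ∧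
      ∀ z ∈ Metric.closedBall (0 : ℂ) r,
        (Q n).eval z * g z - (z - ζ) * (P n).eval z = z ^ (n + 1) * h z) :
    (∀ n, (Q n).eval ζ * g ζ =
      (2 * Real.pi * Complex.I)⁻¹ *
        ∮ ω in C(0, r), (ζ ^ (n + 1) / ω ^ (n + 1)) * ((Q n).eval ω * g ω) / (ω - ζ)) ∧
    Filter.limsup (fun n => ‖(Q n).eval ζ * g ζ‖ ^ ((1 : ℝ) / n)) atTop ≤
      ‖ζ‖ / r := by
  have hr : 0 < r := (norm_nonneg ζ).trans_lt hζ
  have formula : ∀ n, (Q n).eval ζ * g ζ = (2 * Real.pi * Complex.I)⁻¹ *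
      ∮ ω in C(0, r), (ζ ^ (n + 1) / ω ^ (n + 1)) * ((Q n).eval ω * g ω) / (ω - ζ) := by
    intro n
    obtain ⟨h, hh, hQgP⟩ := hzero n
    rw [circleIntegral_pow_div_pow_mul_div_sub (mem_ball_zero_iff.2 hζ) hh.differentiableOn
      (hPdeg n) hQgP, inv_mul_cancel_left₀ Complex.two_pi_I_ne_zero]
  refine ⟨formula, ?_⟩
  obtain ⟨C, hC⟩ := hQbdd
  obtain ⟨M, hM⟩ := (isCompact_sphere (0 : ℂ) r).exists_bound_of_continuousOn
    (hg.continuousOn.mono sphere_subset_closedBall)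
  have hQg : ∀ n, ∀ ω ∈ sphere (0 : ℂ) r, ‖(Q n).eval ω * g ω‖ ≤ C * M := by
    intro n ω hω
    have hωr : ‖ω‖ = r := by simpa using hω
    rw [norm_mul]
    exact mul_le_mul (hC n ω hωr) (hM ω hω) (norm_nonneg _) ((norm_nonneg _).trans (hC n ω hωr))
  refine limsup_rpow_one_div_le_of_le_mul_pow (fun n => norm_nonneg _) (by positivity)
    (K := r * (C * M / (r - ‖ζ‖)) * (‖ζ‖ / r)) fun n => ?_
  rw [formula n]
  exact (norm_two_pi_I_inv_mul_circleIntegral_pow_div_pow_mul_div_sub_le hζ n (hQg n)).trans_eq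
    (by ring)

/-- Key Cauchy-integral estimate: if `g` is analytic on a neighborhood of
the closed disk of radius `r`, `|ζ| < r`, the polynomials `Q n` are uniformly bounded on
the circle `|z| = r`, `deg (P n) < n`, and `Q n · g − (· − ζ) · P n` vanishes to order at
least `n + 1` at the origin (equivalently, `(Q n (z) g z − (z − ζ) P n (z))/z^(n+1)` is
analytic), then `Q n (ζ) g (ζ)` equals the stated Cauchy integral over the circle of radius
`r`, and consequently `limsup_n |Q n (ζ) g (ζ)|^(1/n) ≤ |ζ| / r`. -/
theorem cauchy_integral_estimate (r : ℝ) (hr : 0 < r) (g : ℂ → ℂ)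
    (hg : AnalyticOnNhd ℂ g (Metric.closedBall 0 r))
    (ζ : ℂ) (hζ : ‖ζ‖ < r)
    (Q P : ℕ → Polynomial ℂ)
    (hQbdd : ∃ C : ℝ, ∀ n, ∀ z : ℂ, ‖z‖ = r → ‖(Q n).eval z‖ ≤ C)
    (hPdeg : ∀ n, (P n).degree < n)
    (hzero : ∀ n, ∃ h : ℂ → ℂ, AnalyticOnNhd ℂ h (Metric.closedBall 0 r) ∧
      ∀ z ∈ Metric.closedBall (0 : ℂ) r,
        (Q n).eval z * g z - (z - ζ) * (P n).eval z = z ^ (n + 1) * h z) :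
    (∀ n, (Q n).eval ζ * g ζ =
      (2 * Real.pi * Complex.I)⁻¹ *
        ∮ ω in C(0, r), (ζ ^ (n + 1) / ω ^ (n + 1)) * ((Q n).eval ω * g ω) / (ω - ζ)) ∧
    Filter.limsup (fun n => ‖(Q n).eval ζ * g ζ‖ ^ ((1 : ℝ) / n)) atTop ≤
      ‖ζ‖ / r :=
  cauchy_integral_estimate_general r g hg ζ hζ Q P hQbdd hPdeg hzero
end

section
/- Let (Q_n)_n be a sequence of polynomials of degree at most M, normalized so that the coefficients of each Q_n have absolute values summing to 1, and fix ζ ∈ ℂ and an integer τ ≥ 1. Suppose limsup_{n→∞} |Q_n^{(s)}(ζ)|^{1/n} < 1 for each s = 0, 1, ..., τ−1. Then every uniform limit Q of a subsequence of (Q_n) on compact sets is a nonzero polynomial with a zero of multiplicity at least τ at ζ. -/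
set_option autoImplicit false

open Polynomial Filter Finset

/-!
Locally uniform convergence of holomorphic functions carries over to all derivatives, so
`QL^{(s)}(ζ) = lim Q_{φ n}^{(s)}(ζ)` and `k! · QL.coeff k = lim k! · (Q_{φ n}).coeff k`.
The normalization bounds the coefficients, hence the values `Q_n^{(s)}(ζ)`, so the root-test
hypothesis makes the latter decay geometrically: `QL^{(s)}(ζ) = 0` for `s < τ`. The
normalization itself passes to the limit, so `QL ≠ 0`.
-/

theorem tendsto_zero_of_limsup_rpow_one_div_lt_one {a : ℕ → ℝ} {K : ℝ} (ha : ∀ n, 0 ≤ a n)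
    (hK : ∀ n, a n ≤ K) (h : limsup (fun n => a n ^ ((1 : ℝ) / n)) atTop < 1) :
    Tendsto a atTop (nhds 0) := by
  set u : ℕ → ℝ := fun n => a n ^ ((1 : ℝ) / n) with hu
  have hu_le : ∀ n, u n ≤ max K 1 := by
    intro n
    rcases Nat.eq_zero_or_pos n with rfl | hn
    · simp [hu]
    · calc u n ≤ max K 1 ^ ((1 : ℝ) / n) :=
            Real.rpow_le_rpow (ha n) ((hK n).trans (le_max_left _ _)) (by positivity)
        _ ≤ max K 1 ^ (1 : ℝ) := by
            refine Real.rpow_le_rpow_of_exponent_le (le_max_right _ _) ?_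
            rw [div_le_one (by positivity)]
            exact_mod_cast hn
        _ = max K 1 := Real.rpow_one _
  obtain ⟨c, hc_gt, hc_lt⟩ := exists_between (max_lt h one_pos)
  have hu_lt : ∀ᶠ n in atTop, u n < c :=
    eventually_lt_of_limsup_lt ((le_max_left _ _).trans_lt hc_gt) (isBoundedUnder_of ⟨_, hu_le⟩)
  have ha_le : ∀ᶠ n in atTop, a n ≤ c ^ n := by
    filter_upwards [hu_lt, eventually_ne_atTop 0] with n hn hn0
    calc a n = u n ^ n := by simp only [hu, one_div, Real.rpow_inv_natCast_pow (ha n) hn0]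
      _ ≤ c ^ n := pow_le_pow_left₀ (Real.rpow_nonneg (ha n) _) hn.le n
  exact squeeze_zero' (.of_forall ha) ha_le
    (tendsto_pow_atTop_nhds_zero_of_lt_one ((le_max_right _ _).trans hc_gt.le) hc_lt)

theorem Polynomial.norm_coeff_le_sum_range_norm_coeff {R : Type*} [SeminormedRing R] {p : R[X]}
    {M : ℕ} (hp : p.natDegree ≤ M) (k : ℕ) :
    ‖p.coeff k‖ ≤ ∑ i ∈ range (M + 1), ‖p.coeff i‖ := by
  rcases le_or_gt k M with hk | hk
  · exact single_le_sum (f := fun i => ‖p.coeff i‖) (fun _ _ => norm_nonneg _)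
      (mem_range.mpr (Nat.lt_succ_of_le hk))
  · rw [coeff_eq_zero_of_natDegree_lt (hp.trans_lt hk), norm_zero]
    positivity

theorem Polynomial.norm_eval_iterate_derivative_le {𝕜 : Type*} [NormedField 𝕜] {p : 𝕜[X]} {M : ℕ}
    (hp : p.natDegree ≤ M) (hc : ∀ k, ‖p.coeff k‖ ≤ 1) (s : ℕ) (z : 𝕜) :
    ‖(derivative^[s] p).eval z‖ ≤ (M + 1) * ((M + s) ^ s : ℕ) * max 1 ‖z‖ ^ M := by
  have hdeg : (derivative^[s] p).natDegree < M + 1 :=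
    ((natDegree_iterate_derivative p s).trans (by omega)).trans_lt (lt_add_one M)
  have hcoeff : ∀ i ≤ M, ‖(derivative^[s] p).coeff i‖ ≤ ((M + s) ^ s : ℕ) := fun i hi =>
    calc ‖(derivative^[s] p).coeff i‖ ≤ (i + s).descFactorial s * ‖p.coeff (i + s)‖ := by
          rw [coeff_iterate_derivative]; exact norm_nsmul_le
      _ ≤ (i + s).descFactorial s := mul_le_of_le_one_right (by positivity) (hc _)
      _ ≤ ((M + s) ^ s : ℕ) := by
          exact_mod_cast (Nat.descFactorial_le_pow _ _).trans (Nat.pow_le_pow_left (by omega) s)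
  have hpow : ∀ i ≤ M, ‖z‖ ^ i ≤ max 1 ‖z‖ ^ M := fun i hi =>
    (pow_le_pow_left₀ (norm_nonneg _) (le_max_right _ _) i).trans
      (pow_le_pow_right₀ (le_max_left _ _) hi)
  rw [eval_eq_sum_range' hdeg]
  calc ‖∑ i ∈ range (M + 1), (derivative^[s] p).coeff i * z ^ i‖
      ≤ ∑ i ∈ range (M + 1), ‖(derivative^[s] p).coeff i‖ * ‖z‖ ^ i := by
        refine (norm_sum_le _ _).trans_eq ?_
        simp only [norm_mul, norm_pow]
    _ ≤ ∑ _i ∈ range (M + 1), ((M + s) ^ s : ℕ) * max 1 ‖z‖ ^ M := by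
        refine sum_le_sum fun i hi => ?_
        have hi : i ≤ M := Nat.lt_succ_iff.mp (mem_range.mp hi)
        exact mul_le_mul (hcoeff i hi) (hpow i hi) (by positivity) (by positivity)
    _ = (M + 1) * ((M + s) ^ s : ℕ) * max 1 ‖z‖ ^ M := by
        rw [sum_const, card_range, nsmul_eq_mul]
        push_cast
        ring

theorem Polynomial.eval_zero_iterate_derivative {R : Type*} [CommSemiring R] (p : R[X]) (k : ℕ) :
    (derivative^[k] p).eval 0 = k.factorial * p.coeff k := by
  rw [← coeff_zero_eq_eval_zero, coeff_iterate_derivative, nsmul_eq_mul, zero_add,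
    Nat.descFactorial_self]

theorem Polynomial.pow_X_sub_C_dvd_of_isRoot_iterate_derivative {R : Type*} [CommRing R]
    [IsDomain R] [CharZero R] {p : R[X]} {t : R} {n : ℕ}
    (hroot : ∀ m < n, (derivative^[m] p).IsRoot t) :
    (X - C t) ^ n ∣ p := by
  rcases eq_or_ne p 0 with rfl | hp
  · exact dvd_zero _
  cases n with
  | zero => exact one_dvd p
  | succ n =>
    have hn : n < p.rootMultiplicity t :=
      lt_rootMultiplicity_of_isRoot_iterate_derivative hp fun m hm => hroot m (Nat.lt_succ_of_le hm)
    exact (pow_dvd_pow _ hn).trans (p.pow_rootMultiplicity_dvd t)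

section LocallyUniformLimit

variable {ι : Type*} {l : Filter ι} {F : ι → ℂ[X]} {P : ℂ[X]}

theorem TendstoLocallyUniformly.polynomial_iterate_derivative
    (h : TendstoLocallyUniformly (fun n z => (F n).eval z) P.eval l) (s : ℕ) :
    TendstoLocallyUniformly (fun n z => (derivative^[s] (F n)).eval z)
      (derivative^[s] P).eval l := by
  induction s with
  | zero => exact h
  | succ s ih =>
    have hderiv := (tendstoLocallyUniformlyOn_univ.mpr ih).deriv
      (.of_forall fun n => (derivative^[s] (F n)).differentiable.differentiableOn) isOpen_univ
    have hderiv_eval : ∀ p : ℂ[X], (deriv fun z => p.eval z) = (derivative p).eval :=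
      fun p => funext fun _ => Polynomial.deriv p
    simp only [Function.comp_def, hderiv_eval] at hderiv
    simpa only [Function.iterate_succ_apply'] using tendstoLocallyUniformlyOn_univ.mp hderiv

theorem TendstoLocallyUniformly.tendsto_polynomial_iterate_derivative_eval
    (h : TendstoLocallyUniformly (fun n z => (F n).eval z) P.eval l) (s : ℕ) (z : ℂ) :
    Tendsto (fun n => (derivative^[s] (F n)).eval z) l (nhds ((derivative^[s] P).eval z)) :=
  ((h.polynomial_iterate_derivative s).tendstoLocallyUniformlyOn (s := Set.univ)).tendsto_at
    (Set.mem_univ z)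

theorem TendstoLocallyUniformly.tendsto_polynomial_coeff
    (h : TendstoLocallyUniformly (fun n z => (F n).eval z) P.eval l) (k : ℕ) :
    Tendsto (fun n => (F n).coeff k) l (nhds (P.coeff k)) := by
  have hk : (k.factorial : ℂ) ≠ 0 := Nat.cast_ne_zero.mpr k.factorial_ne_zero
  have := (h.tendsto_polynomial_iterate_derivative_eval k 0).const_mul (k.factorial : ℂ)⁻¹
  simpa only [eval_zero_iterate_derivative, inv_mul_cancel_left₀ hk] using this

end LocallyUniformLimit

theorem limit_of_normalized_polynomials_has_zero_general (M : ℕ) (Q : ℕ → Polynomial ℂ)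
    (hdeg : ∀ n, (Q n).natDegree ≤ M)
    (hnorm : ∀ n, ∑ k ∈ Finset.range (M + 1), ‖(Q n).coeff k‖ = 1)
    (ζ : ℂ) (τ : ℕ)
    (hder : ∀ s < τ,
      Filter.limsup
        (fun n => ‖((Polynomial.derivative)^[s] (Q n)).eval ζ‖ ^ ((1 : ℝ) / n))
        atTop < 1)
    (φ : ℕ → ℕ) (hφ : StrictMono φ) (QL : Polynomial ℂ)
    (hlim : TendstoLocallyUniformly (fun n z => (Q (φ n)).eval z) QL.eval atTop) :
    QL ≠ 0 ∧ (Polynomial.X - Polynomial.C ζ) ^ τ ∣ QL := by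
  have hcoeff : ∀ n k, ‖(Q n).coeff k‖ ≤ 1 := fun n k =>
    (norm_coeff_le_sum_range_norm_coeff (hdeg n) k).trans_eq (hnorm n)
  have hnorm_QL : ∑ k ∈ range (M + 1), ‖QL.coeff k‖ = 1 := by
    have hsum := tendsto_finsetSum (range (M + 1)) fun k _ =>
      (hlim.tendsto_polynomial_coeff k).norm
    simp only [hnorm] at hsum
    exact tendsto_nhds_unique hsum tendsto_const_nhds
  refine ⟨fun h => by simp [h] at hnorm_QL, pow_X_sub_C_dvd_of_isRoot_iterate_derivative ?_⟩
  intro s hs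
  have hdecay : Tendsto (fun n => ‖(derivative^[s] (Q n)).eval ζ‖) atTop (nhds 0) :=
    tendsto_zero_of_limsup_rpow_one_div_lt_one (fun n => norm_nonneg _)
      (fun n => norm_eval_iterate_derivative_le (hdeg n) (hcoeff n) s ζ) (hder s hs)
  exact tendsto_nhds_unique (hlim.tendsto_polynomial_iterate_derivative_eval s ζ)
    (tendsto_zero_iff_norm_tendsto_zero.mpr (hdecay.comp hφ.tendsto_atTop))

/-- If `(Q n)` are polynomials of degree at most `M`, normalized so that the
absolute values of the coefficients sum to `1`, and for each `s < τ` the derivatives satisfy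
`limsup_n |Q n ^ (s) (ζ)|^(1/n) < 1`, then every locally uniform limit `QL` of a subsequence
of `(Q n)` is a nonzero polynomial divisible by `(X − ζ)^τ`, i.e. has a zero of multiplicity
at least `τ` at `ζ`. -/
theorem limit_of_normalized_polynomials_has_zero (M : ℕ) (Q : ℕ → Polynomial ℂ)
    (hdeg : ∀ n, (Q n).natDegree ≤ M)
    (hnorm : ∀ n, ∑ k ∈ Finset.range (M + 1), ‖(Q n).coeff k‖ = 1)
    (ζ : ℂ) (τ : ℕ) (hτ : 1 ≤ τ)
    (hder : ∀ s < τ,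
      Filter.limsup
        (fun n => ‖((Polynomial.derivative)^[s] (Q n)).eval ζ‖ ^ ((1 : ℝ) / n))
        atTop < 1)
    (φ : ℕ → ℕ) (hφ : StrictMono φ) (QL : Polynomial ℂ)
    (hlim : TendstoLocallyUniformly (fun n z => (Q (φ n)).eval z) QL.eval atTop) :
    QL ≠ 0 ∧ (Polynomial.X - Polynomial.C ζ) ^ τ ∣ QL :=
  limit_of_normalized_polynomials_has_zero_general M Q hdeg hnorm ζ τ hder φ hφ QL hlim
end

section
/- Let f = (f_1,...,f_d) be a vector of formal power series and m ∈ ℕ^d a multi-index. Then f has at most |m| = m_1 + ... + m_d system poles with respect to m, counting orders. -/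
set_option autoImplicit false

open Polynomial PowerSeries Filter Metric Finset

/-- `G` has a pole of exact order `s` at `ζ`. -/
def HasPoleOfOrder (G : ℂ → ℂ) (ζ : ℂ) (s : ℕ) : Prop :=
  ∃ H : ℂ → ℂ, AnalyticAt ℂ H ζ ∧ H ζ ≠ 0 ∧
    ∀ᶠ w in nhdsWithin ζ {ζ}ᶜ, G w = H w / (w - ζ) ^ s

/-- `G` represents the formal power series `F` near the origin. -/
def RepresentsNearZero (F : PowerSeries ℂ) (G : ℂ → ℂ) : Prop :=
  ∀ᶠ z in nhds (0 : ℂ), HasSum (fun n : ℕ => PowerSeries.coeff n F * z ^ n) (G z)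

/-- There is a polynomial combination `Σ p_k f_k`, `deg p_k < m_k`, analytic on a
neighborhood of the closed disk `{|z| ≤ |ζ|}` except for a pole of exact order `s`
at `ζ`. -/
def HasComboWithPole (d : ℕ) (f : Fin d → PowerSeries ℂ) (m : Fin d → ℕ)
    (ζ : ℂ) (s : ℕ) : Prop :=
  ∃ (p : Fin d → Polynomial ℂ) (G : ℂ → ℂ),
    (∀ k, (p k).degree < (m k : WithBot ℕ)) ∧
    AnalyticOnNhd ℂ G (Metric.closedBall 0 ‖ζ‖ \ {ζ}) ∧
    HasPoleOfOrder G ζ s ∧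
    RepresentsNearZero (∑ k, (p k : PowerSeries ℂ) * f k) G

/-- `ζ ∈ ℂ*` is a system pole of order `τ` of `f` with respect to `m`:
`τ` is the largest positive integer such that for each `s = 1, …, τ` there is a polynomial
combination as above with a pole of exact order `s` at `ζ`. -/
def IsSystemPole (d : ℕ) (f : Fin d → PowerSeries ℂ) (m : Fin d → ℕ)
    (ζ : ℂ) (τ : ℕ) : Prop :=
  ζ ≠ 0 ∧ 1 ≤ τ ∧ (∀ s, 1 ≤ s → s ≤ τ → HasComboWithPole d f m ζ s) ∧
    ¬ HasComboWithPole d f m ζ (τ + 1)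

open scoped Topology

/-!
The combinations `Σ p_k f_k` witnessing the system poles, one for each pair `(ζ, s)` with
`1 ≤ s ≤ τ ζ`, are linearly independent, so their number `Σ τ ζ` is at most the dimension `|m|`
of the space of coefficient vectors. Suppose a nontrivial linear combination of the
corresponding functions vanished near `0`, and let `ζ₀` be a pole of minimal modulus among
those involved. The combination is analytic on the disk `|z| < |ζ₀|`, so it vanishes there by
the identity theorem, and since `ζ₀` lies on the boundary of that disk it has order `⊤` at `ζ₀`.
But its order at `ζ₀` is `-s`, where `s` is the highest pole order at `ζ₀` involved: every
other term has a pole of lower order at `ζ₀` or is analytic there.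
-/

namespace HasPoleOfOrder

variable {G : ℂ → ℂ} {ζ : ℂ} {s : ℕ}

theorem meromorphicAt (h : HasPoleOfOrder G ζ s) : MeromorphicAt G ζ := by
  obtain ⟨H, hH, -, hG⟩ := h
  have : MeromorphicAt (fun w => H w / (w - ζ) ^ s) ζ := by fun_prop
  exact this.congr (hG.mono fun w hw => hw.symm)

theorem meromorphicOrderAt_eq (h : HasPoleOfOrder G ζ s) :
    meromorphicOrderAt G ζ = (-s : ℤ) := by
  obtain ⟨H, hH, hH0, hG⟩ := id h
  rw [meromorphicOrderAt_eq_int_iff h.meromorphicAt]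
  refine ⟨H, hH, hH0, hG.mono fun w hw => ?_⟩
  rw [hw, zpow_neg, zpow_natCast, smul_eq_mul, div_eq_inv_mul]

theorem const_mul (h : HasPoleOfOrder G ζ s) {c : ℂ} (hc : c ≠ 0) :
    HasPoleOfOrder (fun w => c * G w) ζ s := by
  obtain ⟨H, hH, hH0, hG⟩ := h
  exact ⟨fun w => c * H w, analyticAt_const.mul hH, mul_ne_zero hc hH0,
    hG.mono fun w hw => by simp only [hw, mul_div_assoc]⟩

end HasPoleOfOrder

section MeromorphicSum

variable {𝕜 E ι : Type*} [NontriviallyNormedField 𝕜] [NormedAddCommGroup E] [NormedSpace 𝕜 E]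
  {x : 𝕜} {A : Finset ι} {f : ι → 𝕜 → E} {n : ℤ}

theorem lt_meromorphicOrderAt_sum (hf : ∀ i ∈ A, MeromorphicAt (f i) x)
    (hn : ∀ i ∈ A, n < meromorphicOrderAt (f i) x) :
    n < meromorphicOrderAt (∑ i ∈ A, f i) x := by
  classical
  induction A using Finset.induction_on with
  | empty =>
    rw [Finset.sum_empty, meromorphicOrderAt_eq_top_iff.2 (by simp)]
    exact WithTop.coe_lt_top n
  | insert i A hi ih =>
    rw [Finset.sum_insert hi]
    simp only [Finset.mem_insert, forall_eq_or_imp] at hf hn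
    exact (lt_min hn.1 (ih hf.2 hn.2)).trans_le
      (meromorphicOrderAt_add hf.1 (MeromorphicAt.sum hf.2))

theorem meromorphicOrderAt_sum_eq_of_lt [DecidableEq ι] {j : ι} (hj : j ∈ A)
    (hf : ∀ i ∈ A, MeromorphicAt (f i) x)
    (hfj : meromorphicOrderAt (f j) x = n) (hlt : ∀ i ∈ A.erase j, n < meromorphicOrderAt (f i) x) :
    meromorphicOrderAt (∑ i ∈ A, f i) x = n := by
  have hf' : ∀ i ∈ A.erase j, MeromorphicAt (f i) x := fun i hi => hf i (mem_of_mem_erase hi)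
  rw [← add_sum_erase A f hj, meromorphicOrderAt_add_eq_left_of_lt (MeromorphicAt.sum hf')
    (hfj ▸ lt_meromorphicOrderAt_sum hf' hlt), hfj]

end MeromorphicSum

theorem frequently_mem_ball_nhdsNE {E : Type*} [NormedAddCommGroup E] [NormedSpace ℝ E]
    {ζ : E} (hζ : ζ ≠ 0) : ∃ᶠ z in 𝓝[≠] ζ, z ∈ ball (0 : E) ‖ζ‖ := by
  have : (𝓝[ball (0 : E) ‖ζ‖] ζ).NeBot := by
    rw [← mem_closure_iff_nhdsWithin_neBot, closure_ball _ (norm_ne_zero_iff.2 hζ)]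
    simp
  refine (eventually_mem_nhdsWithin.frequently).filter_mono (nhdsWithin_mono _ fun z hz => ?_)
  exact fun h => (mem_ball_zero_iff.1 hz).ne (congrArg norm h)

theorem RepresentsNearZero.sum_smul {ι : Type*} {A : Finset ι} {F : ι → PowerSeries ℂ}
    {G : ι → ℂ → ℂ} (h : ∀ i ∈ A, RepresentsNearZero (F i) (G i)) (c : ι → ℂ) :
    RepresentsNearZero (∑ i ∈ A, c i • F i) (fun z => ∑ i ∈ A, c i * G i z) := by
  filter_upwards [(eventually_all_finset A).2 h] with z hz
  simpa [Finset.sum_mul, mul_assoc] using hasSum_sum fun i hi => (hz i hi).mul_left (c i)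

theorem RepresentsNearZero.eventually_eq_zero {G : ℂ → ℂ} (h : RepresentsNearZero 0 G) :
    ∀ᶠ z in 𝓝 0, G z = 0 :=
  h.mono fun z hz => hz.unique (by simp)

section PoleFamily

variable {ι : Type*} {ζ : ι → ℂ} {s : ι → ℕ} {G : ι → ℂ → ℂ}

theorem not_eventually_sum_mul_eq_zero
    (hinj : Function.Injective fun i => (ζ i, s i)) (hζ : ∀ i, ζ i ≠ 0) (hs : ∀ i, 1 ≤ s i)
    (hG : ∀ i, AnalyticOnNhd ℂ (G i) (closedBall 0 ‖ζ i‖ \ {ζ i}))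
    (hpole : ∀ i, HasPoleOfOrder (G i) (ζ i) (s i))
    {A : Finset ι} (hA : A.Nonempty) {c : ι → ℂ} (hc : ∀ i ∈ A, c i ≠ 0) :
    ¬ ∀ᶠ z in 𝓝 0, ∑ i ∈ A, c i * G i z = 0 := by
  classical
  intro hzero
  obtain ⟨i₀, hi₀, hmin⟩ := A.exists_min_image (fun i => ‖ζ i‖) hA
  obtain ⟨j, hj, hmax⟩ := {i ∈ A | ζ i = ζ i₀}.exists_max_image s ⟨i₀, by simp [hi₀]⟩
  rw [Finset.mem_filter] at hj
  set Φ : ℂ → ℂ := ∑ i ∈ A, fun z => c i * G i z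
  have hterm_analytic : ∀ i ∈ A, ∀ w, ‖w‖ ≤ ‖ζ i‖ → w ≠ ζ i →
      AnalyticAt ℂ (fun z => c i * G i z) w := fun i _ w hw hne =>
    analyticAt_const.mul (hG i w ⟨mem_closedBall_zero_iff.2 hw, hne⟩)
  have hterm_meromorphic : ∀ i ∈ A, MeromorphicAt (fun z => c i * G i z) (ζ i₀) := by
    intro i hi
    by_cases hζi : ζ i₀ = ζ i
    · exact hζi ▸ ((hpole i).const_mul (hc i hi)).meromorphicAt
    · exact (hterm_analytic i hi _ (hmin i hi) hζi).meromorphicAt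
  have hball : Set.EqOn Φ 0 (ball 0 ‖ζ i₀‖) := by
    refine AnalyticOnNhd.eqOn_zero_of_preconnected_of_eventuallyEq_zero (𝕜 := ℂ) (fun w hw => ?_)
      (convex_ball _ _).isPreconnected (mem_ball_self (norm_pos_iff.2 (hζ i₀)))
      (hzero.mono fun z hz => by simpa [Φ] using hz)
    have hw : ‖w‖ < ‖ζ i₀‖ := mem_ball_zero_iff.1 hw
    refine Finset.analyticAt_sum _ fun i hi => hterm_analytic i hi w (hw.le.trans (hmin i hi)) ?_
    rintro rfl
    exact (hw.trans_le (hmin i hi)).false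
  have htop : meromorphicOrderAt Φ (ζ i₀) = ⊤ :=
    meromorphicOrderAt_eq_top_iff.2 <|
      (MeromorphicAt.sum hterm_meromorphic).frequently_zero_iff_eventuallyEq_zero.1
        ((frequently_mem_ball_nhdsNE (hζ i₀)).mono fun z hz => hball hz)
  have hlower : ∀ i ∈ A.erase j,
      ((-s j : ℤ) : WithTop ℤ) < meromorphicOrderAt (fun z => c i * G i z) (ζ i₀) := by
    intro i hi
    obtain ⟨hij, hi⟩ := Finset.mem_erase.1 hi
    by_cases hζi : ζ i = ζ i₀
    · have hle : s i ≤ s j := hmax i (Finset.mem_filter.2 ⟨hi, hζi⟩)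
      have hne : s i ≠ s j := fun h => hij (hinj (Prod.ext (hζi.trans hj.2.symm) h))
      rw [← hζi, ((hpole i).const_mul (hc i hi)).meromorphicOrderAt_eq, WithTop.coe_lt_coe]
      omega
    · refine lt_of_lt_of_le ?_
        (hterm_analytic i hi _ (hmin i hi) (Ne.symm hζi)).meromorphicOrderAt_nonneg
      have := hs j
      exact WithTop.coe_lt_coe.2 (by omega)
  have hord : meromorphicOrderAt Φ (ζ i₀) = (-s j : ℤ) :=
    meromorphicOrderAt_sum_eq_of_lt hj.1 hterm_meromorphic
      (hj.2 ▸ ((hpole j).const_mul (hc j hj.1)).meromorphicOrderAt_eq) hlower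
  rw [htop] at hord
  exact WithTop.top_ne_coe hord

theorem linearIndependent_of_representsNearZero {F : ι → PowerSeries ℂ}
    (hinj : Function.Injective fun i => (ζ i, s i)) (hζ : ∀ i, ζ i ≠ 0) (hs : ∀ i, 1 ≤ s i)
    (hG : ∀ i, AnalyticOnNhd ℂ (G i) (closedBall 0 ‖ζ i‖ \ {ζ i}))
    (hpole : ∀ i, HasPoleOfOrder (G i) (ζ i) (s i)) (hrep : ∀ i, RepresentsNearZero (F i) (G i)) :
    LinearIndependent ℂ F := by
  classical
  refine linearIndependent_iff'.2 fun A c hsum i hi => ?_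
  by_contra hci
  have hsum' : ∑ i ∈ A with c i ≠ 0, c i • F i = 0 := by
    rwa [Finset.sum_filter_of_ne fun _ _ h => left_ne_zero_of_smul h]
  refine not_eventually_sum_mul_eq_zero (A := {i ∈ A | c i ≠ 0}) hinj hζ hs hG hpole
    ⟨i, Finset.mem_filter.2 ⟨hi, hci⟩⟩ (fun i hi => (Finset.mem_filter.1 hi).2) ?_
  exact (hsum' ▸ RepresentsNearZero.sum_smul (fun i _ => hrep i) c).eventually_eq_zero

end PoleFamily

instance Polynomial.degreeLT.finite (R : Type*) [CommRing R] (n : ℕ) :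
    Module.Finite R (degreeLT R n) :=
  Module.Finite.equiv (degreeLTEquiv R n).symm

theorem Polynomial.finrank_pi_degreeLT {K ι : Type*} [Field K] [Fintype ι] (m : ι → ℕ) :
    Module.finrank K (∀ k, degreeLT K (m k)) = ∑ k, m k := by
  rw [Module.finrank_pi_fintype]
  simp [(degreeLTEquiv K _).finrank_eq]

noncomputable def polynomialCombination {R ι : Type*} [CommRing R] [Fintype ι]
    (f : ι → PowerSeries R) (m : ι → ℕ) : (∀ k, degreeLT R (m k)) →ₗ[R] PowerSeries R :=
  ∑ k, LinearMap.mulRight R (f k) ∘ₗ (coeToPowerSeries.algHom R).toLinearMap ∘ₗ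
    (degreeLT R (m k)).subtype ∘ₗ LinearMap.proj k

theorem polynomialCombination_apply {R ι : Type*} [CommRing R] [Fintype ι]
    (f : ι → PowerSeries R) (m : ι → ℕ) (v : ∀ k, degreeLT R (m k)) :
    polynomialCombination f m v = ∑ k, ((v k : R[X]) : PowerSeries R) * f k := by
  simp [polynomialCombination]

theorem card_system_poles_le_general (d : ℕ) (f : Fin d → PowerSeries ℂ) (m : Fin d → ℕ)
    (S : Finset ℂ) (τ : ℂ → ℕ)
    (hS : ∀ ζ ∈ S, IsSystemPole d f m ζ (τ ζ)) :
    ∑ ζ ∈ S, τ ζ ≤ ∑ k, m k := by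
  let T := S.sigma fun ζ => Finset.Icc 1 (τ ζ)
  have hT : ∀ i : T, i.1.1 ∈ S ∧ 1 ≤ i.1.2 ∧ i.1.2 ≤ τ i.1.1 := fun i =>
    (Finset.mem_sigma.1 i.2).imp_right Finset.mem_Icc.1
  have hcombo : ∀ i : T, HasComboWithPole d f m i.1.1 i.1.2 := fun i =>
    (hS _ (hT i).1).2.2.1 _ (hT i).2.1 (hT i).2.2
  choose p G hdeg hG hpole hrep using hcombo
  let v : T → ∀ k, degreeLT ℂ (m k) := fun i k => ⟨p i k, mem_degreeLT.2 (hdeg i k)⟩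
  have hv : LinearIndependent ℂ v := by
    refine .of_comp (polynomialCombination f m) ?_
    refine linearIndependent_of_representsNearZero (fun i j hij => Subtype.ext ?_)
      (fun i => (hS _ (hT i).1).1) (fun i => (hT i).2.1) hG hpole fun i => ?_
    · exact Sigma.ext (congrArg Prod.fst hij) (heq_of_eq (congrArg Prod.snd hij))
    · simpa [polynomialCombination_apply, v] using hrep i
  calc ∑ ζ ∈ S, τ ζ = Fintype.card T := by simp [T, Finset.card_sigma]
    _ ≤ Module.finrank ℂ (∀ k, degreeLT ℂ (m k)) := hv.fintype_card_le_finrank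
    _ = ∑ k, m k := finrank_pi_degreeLT m

/-- A system `f` of `d` formal power series has at most
`|m| = m_1 + ⋯ + m_d` system poles with respect to `m ∈ ℕ^d`, counting orders. -/
theorem card_system_poles_le (d : ℕ) (f : Fin d → PowerSeries ℂ) (m : Fin d → ℕ)
    (hm : ∀ k, 1 ≤ m k) (S : Finset ℂ) (τ : ℂ → ℕ)
    (hS : ∀ ζ ∈ S, IsSystemPole d f m ζ (τ ζ)) :
    ∑ ζ ∈ S, τ ζ ≤ ∑ k, m k :=
  card_system_poles_le_general d f m S τ hS
end
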